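/- arXiv:1104.1620 — 2 statements merged into one kernel-verified Lean document; each statement's English description precedes it below -/
import Mathlib

section
/- Let (ε_j)_{j≥0} be a nonincreasing sequence of numbers in [0,1) with limsup_{n→∞} ε_n^{1/n} < 1. Then there exist constants c < ∞ and u > 0, depending only on the sequence (ε_j), such that the following holds. Let (X_n)_{n≥0} be any time-homogeneous Markov chain on the state space ℕ = {0,1,2,...} whose transition probabilities satisfy p(j, j+1) = 1 − p(j, 0) and p(j,0) ≤ ε_j for every j (i.e., from state j the chain moves either to j+1 or back to 0, and the probability of moving to 0 is at most ε_j). Then for every n ≥ 0, P{X_n < n/2 | X_0 = 0} ≤ c e^{−nu}. -/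
open MeasureTheory ProbabilityTheory Filter Real

open Finset Topology

/-!
Started at `0`, the chain is at `k ≤ n` at time `n` exactly when it was at `0` at time `n - k` and
then stepped up `k` times, so `P(X_n = k) ≤ q_{n-k}` with `q_t = P(X_t = 0)`. The renewal equation
`q_{t+1} = ∑_j q_{t-j} f_j`, with `f_j` the probability of a first return at time `j + 1`, gives
`q_t ≤ z^{-t}` as soon as `∑ f_j z^{j+1} ≤ 1`. Such a `z > 1` exists uniformly in the chain: the
root condition makes `ε` geometrically small, so `∏ (1 - ε_j) ≥ δ > 0`, whence
`∑_{j<T} f_j ≤ 1 - δ`, while `∑ ε_j (z^{j+1} - 1) ≤ δ` for `z` close to `1`. Summing `z^{k-n}`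
over `k < n/2` then gives `P(X_n < n/2) ≤ z/(z-1) · z^{-n/2}`.
-/

theorem one_sub_sum_le_prod_one_sub {ι : Type*} (s : Finset ι) {f : ι → ℝ}
    (hf0 : ∀ i ∈ s, 0 ≤ f i) (hf1 : ∀ i ∈ s, f i ≤ 1) :
    1 - ∑ i ∈ s, f i ≤ ∏ i ∈ s, (1 - f i) := by
  classical
  induction s using Finset.induction_on with
  | empty => simp
  | insert a s ha ih =>
    rw [sum_insert ha, prod_insert ha]
    have ha0 := hf0 a (mem_insert_self a s)
    have ha1 := hf1 a (mem_insert_self a s)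
    have hs0 : 0 ≤ ∑ i ∈ s, f i := sum_nonneg fun i hi => hf0 i (mem_insert_of_mem hi)
    have ih' := ih (fun i hi => hf0 i (mem_insert_of_mem hi))
      fun i hi => hf1 i (mem_insert_of_mem hi)
    nlinarith

theorem exists_pos_le_prod_one_sub {ε : ℕ → ℝ} (hε : Summable ε) (h0 : ∀ j, 0 ≤ ε j)
    (h1 : ∀ j, ε j < 1) : ∃ δ > 0, ∀ M, δ ≤ ∏ j ∈ range M, (1 - ε j) := by
  obtain ⟨J, hJ⟩ := ((tendsto_sum_nat_add ε).eventually (gt_mem_nhds one_half_pos)).exists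
  set P : ℕ → ℝ := fun M => ∏ j ∈ range M, (1 - ε j) with hP
  have hP_anti : Antitone P := antitone_nat_of_succ_le fun M => by
    simp only [hP, prod_range_succ]
    exact mul_le_of_le_one_right (prod_nonneg fun j _ => by linarith [h1 j]) (by linarith [h0 M])
  have hPJ : 0 < P J := prod_pos fun j _ => by linarith [h1 j]
  refine ⟨P J / 2, by positivity, fun M => ?_⟩
  have htail : 1 / 2 ≤ ∏ j ∈ Ico J (max M J), (1 - ε j) := by
    have hsum : ∑ j ∈ Ico J (max M J), ε j ≤ ∑' k, ε (k + J) := by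
      rw [sum_Ico_eq_sum_range]
      simp_rw [add_comm J]
      exact ((summable_nat_add_iff J).2 hε).sum_le_tsum _ fun k _ => h0 _
    linarith [one_sub_sum_le_prod_one_sub (Ico J (max M J)) (fun j _ => h0 j)
      fun j _ => (h1 j).le]
  calc P J / 2 ≤ P J * ∏ j ∈ Ico J (max M J), (1 - ε j) := by nlinarith
    _ = P (max M J) := prod_range_mul_prod_Ico _ (le_max_right M J)
    _ ≤ P M := hP_anti (le_max_left M J)

theorem exists_le_mul_pow_of_limsup_rpow_lt_one {ε : ℕ → ℝ} (h0 : ∀ j, 0 ≤ ε j)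
    (h1 : ∀ j, ε j ≤ 1) (hlim : limsup (fun n => ε n ^ ((1 : ℝ) / n)) atTop < 1) :
    ∃ C ρ : ℝ, 0 < ρ ∧ ρ < 1 ∧ ∀ j, ε j ≤ C * ρ ^ j := by
  obtain ⟨ρ, hρlim, hρ1⟩ := exists_between (max_lt hlim one_pos)
  have hρ0 : 0 < ρ := (le_max_right _ _).trans_lt hρlim
  have hbdd : IsBoundedUnder (· ≤ ·) atTop fun n => ε n ^ ((1 : ℝ) / n) :=
    isBoundedUnder_of ⟨1, fun n => rpow_le_one (h0 n) (h1 n) (by positivity)⟩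
  obtain ⟨N, hN⟩ := eventually_atTop.1
    (eventually_lt_of_limsup_lt ((le_max_left _ _).trans_lt hρlim) hbdd)
  refine ⟨(ρ ^ (N + 1))⁻¹, ρ, hρ0, hρ1, fun j => ?_⟩
  rw [← div_eq_inv_mul, le_div_iff₀ (by positivity)]
  rcases le_or_gt (N + 1) j with hj | hj
  · have hroot : ε j = (ε j ^ ((1 : ℝ) / j)) ^ j := by
      rw [← rpow_natCast, ← rpow_mul (h0 j), one_div_mul_cancel (Nat.cast_ne_zero.2 (by omega)),
        rpow_one]
    calc ε j * ρ ^ (N + 1) ≤ ε j * 1 :=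
          mul_le_mul_of_nonneg_left (pow_le_one₀ hρ0.le hρ1.le) (h0 j)
      _ ≤ ρ ^ j := by
          rw [mul_one, hroot]
          exact pow_le_pow_left₀ (rpow_nonneg (h0 j) _) (hN j (by omega)).le j
  · calc ε j * ρ ^ (N + 1) ≤ 1 * ρ ^ j :=
          mul_le_mul (h1 j) (pow_le_pow_of_le_one hρ0.le hρ1.le hj.le) (by positivity) zero_le_one
      _ = ρ ^ j := one_mul _

theorem exists_one_lt_sum_mul_pow_sub_one_le {ε : ℕ → ℝ} {C ρ δ : ℝ} (h0 : ∀ j, 0 ≤ ε j)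
    (hρ0 : 0 ≤ ρ) (hρ1 : ρ < 1) (hgeo : ∀ j, ε j ≤ C * ρ ^ j) (hδ : 0 < δ) :
    ∃ z, 1 < z ∧ ∀ T, ∑ j ∈ range T, ε j * (z ^ (j + 1) - 1) ≤ δ := by
  -- `g z = C * ∑' j, ρ ^ j * (z ^ (j + 1) - 1)` for `ρ z < 1`, and `g 1 = 0`.
  set g : ℝ → ℝ := fun z => C * (z * (1 - ρ * z)⁻¹ - (1 - ρ)⁻¹) with hg
  have hg1 : Tendsto g (𝓝 1) (𝓝 0) := by
    have : ContinuousAt g 1 := by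
      fun_prop (disch := simp only [mul_one]; linarith)
    simpa [hg] using this.tendsto
  have hρz_near : ∀ᶠ z in 𝓝 (1 : ℝ), ρ * z < 1 :=
    (continuous_const.mul continuous_id).continuousAt.eventually_lt continuousAt_const
      (by simpa using hρ1)
  obtain ⟨z, ⟨hgz, hρz⟩, hz1 : 1 < z⟩ :=
    ((((hg1.eventually (gt_mem_nhds hδ)).and hρz_near).filter_mono nhdsWithin_le_nhds).and
      (self_mem_nhdsWithin (s := Set.Ioi 1))).exists
  have hC : 0 ≤ C := by simpa using (h0 0).trans (hgeo 0)
  have hsum : HasSum (fun j => ρ ^ j * (z ^ (j + 1) - 1)) (z * (1 - ρ * z)⁻¹ - (1 - ρ)⁻¹) := by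
    have h := ((hasSum_geometric_of_lt_one (by positivity) hρz).mul_left z).sub
      (hasSum_geometric_of_lt_one hρ0 hρ1)
    rwa [show (fun j : ℕ => ρ ^ j * (z ^ (j + 1) - 1)) = fun j => z * (ρ * z) ^ j - ρ ^ j from
      funext fun j => by rw [mul_pow]; ring]
  refine ⟨z, hz1, fun T => ?_⟩
  calc ∑ j ∈ range T, ε j * (z ^ (j + 1) - 1)
      ≤ ∑ j ∈ range T, C * (ρ ^ j * (z ^ (j + 1) - 1)) := sum_le_sum fun j _ => by
        rw [← mul_assoc]
        exact mul_le_mul_of_nonneg_right (hgeo j) (by linarith [one_le_pow₀ hz1.le (n := j + 1)])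
    _ = C * ∑ j ∈ range T, ρ ^ j * (z ^ (j + 1) - 1) := (mul_sum _ _ _).symm
    _ ≤ g z := mul_le_mul_of_nonneg_left (sum_le_hasSum _ (fun j _ => by
        have := one_le_pow₀ hz1.le (n := j + 1); positivity) hsum) hC
    _ ≤ δ := hgz.le

theorem sum_range_half_pow_div_pow_le {z : ℝ} (hz : 1 < z) (n : ℕ) :
    ∑ k ∈ range ((n + 1) / 2), z ^ k / z ^ n ≤ z / (z - 1) * exp (-(log z / 2) * n) := by
  have hz0 : 0 < z := by linarith
  have hlog : 0 < log z := log_pos hz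
  have hpow : ∀ m : ℕ, z ^ m = exp (log z * m) := fun m => by
    rw [← rpow_natCast, rpow_def_of_pos hz0]
  have hK : (((n + 1) / 2 : ℕ) : ℝ) ≤ (n + 1) / 2 := by
    simpa using Nat.cast_div_le (α := ℝ) (m := n + 1) (n := 2)
  have hexp : z ^ ((n + 1) / 2) / z ^ n ≤ z * exp (-(log z / 2) * n) := by
    rw [hpow, hpow, ← exp_sub, show z * exp (-(log z / 2) * n) = exp (log z + -(log z / 2) * n) by
      rw [exp_add, exp_log hz0]]
    gcongr
    nlinarith
  calc ∑ k ∈ range ((n + 1) / 2), z ^ k / z ^ n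
      = (z ^ ((n + 1) / 2) - 1) / (z - 1) / z ^ n := by rw [← sum_div, geom_sum_eq hz.ne']
    _ ≤ z ^ ((n + 1) / 2) / (z - 1) / z ^ n := by gcongr; linarith
    _ = z ^ ((n + 1) / 2) / z ^ n / (z - 1) := by ring
    _ ≤ z * exp (-(log z / 2) * n) / (z - 1) := by gcongr
    _ = z / (z - 1) * exp (-(log z / 2) * n) := by ring



theorem mul_pow_le_one_of_renewal {q a : ℕ → ℝ} {z : ℝ} (hz : 0 ≤ z) (ha : ∀ j, 0 ≤ a j)
    (hq0 : q 0 ≤ 1) (hq : ∀ t, q (t + 1) = ∑ j ∈ range (t + 1), q (t - j) * a j)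
    (hgen : ∀ T, ∑ j ∈ range T, a j * z ^ (j + 1) ≤ 1) (t : ℕ) : q t * z ^ t ≤ 1 := by
  induction t using Nat.strong_induction_on with
  | _ t ih =>
    cases t with
    | zero => simpa using hq0
    | succ t =>
      calc q (t + 1) * z ^ (t + 1)
          = ∑ j ∈ range (t + 1), q (t - j) * z ^ (t - j) * (a j * z ^ (j + 1)) := by
            rw [hq, sum_mul]
            refine sum_congr rfl fun j hj => ?_
            rw [show t + 1 = t - j + (j + 1) by grind, pow_add]
            ring
        _ ≤ ∑ j ∈ range (t + 1), a j * z ^ (j + 1) := sum_le_sum fun j hj =>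
            mul_le_of_le_one_left (by have := ha j; positivity) (ih _ (by omega))
        _ ≤ 1 := hgen _

namespace ResetChain

/-- `law p n k` is `P(X_n = k | X_0 = 0)` for a chain moving from `j` only to `j + 1` or `0`. -/
def law (p : ℕ → ℕ → ℝ) : ℕ → ℕ → ℝ
  | 0, k => if k = 0 then 1 else 0
  | n + 1, 0 => ∑ j ∈ range (n + 1), law p n j * p j 0
  | n + 1, k + 1 => law p n k * p k (k + 1)

/-- Probability that the chain started at `0` first returns to `0` at time `j + 1`. -/
def firstReturn (p : ℕ → ℕ → ℝ) (j : ℕ) : ℝ := (∏ i ∈ range j, p i (i + 1)) * p j 0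

variable {p : ℕ → ℕ → ℝ}

theorem law_nonneg (hp : ∀ j m, 0 ≤ p j m) (n k : ℕ) : 0 ≤ law p n k := by
  induction n generalizing k with
  | zero => unfold law; positivity
  | succ n ih =>
    cases k with
    | zero => exact sum_nonneg fun j _ => mul_nonneg (ih j) (hp j 0)
    | succ k => exact mul_nonneg (ih k) (hp k (k + 1))

theorem law_eq_zero_of_lt {n k : ℕ} (h : n < k) : law p n k = 0 := by
  induction n generalizing k with
  | zero => simp [law, h.ne']
  | succ n ih =>
    obtain ⟨k, rfl⟩ := Nat.exists_eq_add_of_lt (Nat.zero_lt_of_lt h)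
    simp [law, ih (show n < k by omega)]

theorem law_eq_law_sub_mul_prod {n k : ℕ} (h : k ≤ n) :
    law p n k = law p (n - k) 0 * ∏ i ∈ range k, p i (i + 1) := by
  induction k generalizing n with
  | zero => simp
  | succ k ih =>
    obtain ⟨n, rfl⟩ := Nat.exists_eq_add_of_le' (Nat.one_le_of_lt h)
    rw [law, ih (by omega), prod_range_succ, show n + 1 - (k + 1) = n - k by omega]
    ring

theorem law_succ_zero (t : ℕ) :
    law p (t + 1) 0 = ∑ j ∈ range (t + 1), law p (t - j) 0 * firstReturn p j := by
  rw [law]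
  refine sum_congr rfl fun j hj => ?_
  rw [law_eq_law_sub_mul_prod (by grind), firstReturn]
  ring

theorem hasSum_law_mul (hsupp : ∀ j m, m ≠ 0 → m ≠ j + 1 → p j m = 0) (n k : ℕ) :
    HasSum (fun j => law p n j * p j k) (law p (n + 1) k) := by
  cases k with
  | zero =>
    exact hasSum_sum_of_ne_finset_zero fun j hj => by
      rw [law_eq_zero_of_lt (by grind), zero_mul]
  | succ k =>
    refine hasSum_single k fun j hj => ?_
    rw [hsupp j (k + 1) k.succ_ne_zero (by omega), mul_zero]

theorem prod_range_step_le_one (hp : ∀ j m, 0 ≤ p j m) (hsum : ∀ j, p j 0 + p j (j + 1) = 1)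
    (k : ℕ) : ∏ i ∈ range k, p i (i + 1) ≤ 1 :=
  prod_le_one (fun i _ => hp i _) fun i _ => by linarith [hsum i, hp i 0]

theorem firstReturn_nonneg (hp : ∀ j m, 0 ≤ p j m) (j : ℕ) : 0 ≤ firstReturn p j :=
  mul_nonneg (prod_nonneg fun i _ => hp i _) (hp j 0)

theorem firstReturn_le (hp : ∀ j m, 0 ≤ p j m) (hsum : ∀ j, p j 0 + p j (j + 1) = 1) (j : ℕ) :
    firstReturn p j ≤ p j 0 :=
  mul_le_of_le_one_left (hp j 0) (prod_range_step_le_one hp hsum j)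

theorem sum_firstReturn (hsum : ∀ j, p j 0 + p j (j + 1) = 1) (T : ℕ) :
    ∑ j ∈ range T, firstReturn p j = 1 - ∏ i ∈ range T, p i (i + 1) := by
  have htele := sum_range_sub' (fun T => ∏ i ∈ range T, p i (i + 1)) T
  rw [prod_range_zero] at htele
  rw [← htele]
  refine sum_congr rfl fun j _ => ?_
  rw [firstReturn, prod_range_succ, show p j 0 = 1 - p j (j + 1) by linarith [hsum j]]
  ring

theorem sum_firstReturn_mul_pow_le_one {ε : ℕ → ℝ} {δ z : ℝ} (hp : ∀ j m, 0 ≤ p j m)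
    (hsum : ∀ j, p j 0 + p j (j + 1) = 1) (hpε : ∀ j, p j 0 ≤ ε j) (hε1 : ∀ j, ε j ≤ 1)
    (hδ : ∀ T, δ ≤ ∏ j ∈ range T, (1 - ε j))
    (hz : ∀ T, ∑ j ∈ range T, ε j * (z ^ (j + 1) - 1) ≤ δ) (hz1 : 1 ≤ z) (T : ℕ) :
    ∑ j ∈ range T, firstReturn p j * z ^ (j + 1) ≤ 1 := by
  have hprod : δ ≤ ∏ i ∈ range T, p i (i + 1) := (hδ T).trans <|
    prod_le_prod (fun j _ => by linarith [hε1 j]) fun j _ => by linarith [hsum j, hpε j]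
  have hexcess : ∑ j ∈ range T, firstReturn p j * (z ^ (j + 1) - 1) ≤ δ :=
    (sum_le_sum fun j _ => mul_le_mul_of_nonneg_right ((firstReturn_le hp hsum j).trans (hpε j))
      (by linarith [one_le_pow₀ hz1 (n := j + 1)])).trans (hz T)
  calc ∑ j ∈ range T, firstReturn p j * z ^ (j + 1)
      = ∑ j ∈ range T, firstReturn p j + ∑ j ∈ range T, firstReturn p j * (z ^ (j + 1) - 1) := by
        rw [← sum_add_distrib]; exact sum_congr rfl fun j _ => by ring
    _ ≤ 1 := by rw [sum_firstReturn hsum]; linarith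

theorem law_le_pow_div_pow {z : ℝ} (hp : ∀ j m, 0 ≤ p j m) (hsum : ∀ j, p j 0 + p j (j + 1) = 1)
    (hz : 0 < z) (hgen : ∀ T, ∑ j ∈ range T, firstReturn p j * z ^ (j + 1) ≤ 1) (n k : ℕ) :
    law p n k ≤ z ^ k / z ^ n := by
  rcases lt_or_ge n k with hnk | hkn
  · rw [law_eq_zero_of_lt hnk]; positivity
  have hreturn : law p (n - k) 0 * z ^ (n - k) ≤ 1 :=
    mul_pow_le_one_of_renewal (q := fun t => law p t 0) hz.le (firstReturn_nonneg hp)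
      (by simp only [law]; norm_num) law_succ_zero hgen (n - k)
  rw [law_eq_law_sub_mul_prod hkn, le_div_iff₀ (by positivity),
    show z ^ n = z ^ (n - k) * z ^ k by rw [← pow_add, Nat.sub_add_cancel hkn]]
  calc law p (n - k) 0 * (∏ i ∈ range k, p i (i + 1)) * (z ^ (n - k) * z ^ k)
      ≤ law p (n - k) 0 * 1 * (z ^ (n - k) * z ^ k) := by
        gcongr
        · exact law_nonneg hp _ _
        · exact prod_range_step_le_one hp hsum k
    _ = law p (n - k) 0 * z ^ (n - k) * z ^ k := by ring
    _ ≤ z ^ k := mul_le_of_le_one_left (by positivity) hreturn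

end ResetChain

def IsMarkovChain {Ω : Type*} [MeasurableSpace Ω] (μ : Measure Ω) (X : ℕ → Ω → ℕ)
    (p : ℕ → ℕ → ℝ) : Prop :=
  ∀ n (s : ℕ → ℕ) (m : ℕ), μ {ω | (∀ i ≤ n, X i ω = s i) ∧ X (n + 1) ω = m}
    = μ {ω | ∀ i ≤ n, X i ω = s i} * ENNReal.ofReal (p (s n) m)

namespace IsMarkovChain

variable {Ω : Type*} [MeasurableSpace Ω] {μ : Measure Ω} {X : ℕ → Ω → ℕ} {p : ℕ → ℕ → ℝ}

theorem measure_cylinder_inter (hM : IsMarkovChain μ X p) (n : ℕ) (v : Fin (n + 1) → ℕ)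
    (m : ℕ) :
    μ ((fun ω (i : Fin (n + 1)) => X i ω) ⁻¹' {v} ∩ X (n + 1) ⁻¹' {m})
      = μ ((fun ω (i : Fin (n + 1)) => X i ω) ⁻¹' {v}) * ENNReal.ofReal (p (v (Fin.last n)) m) := by
  set s : ℕ → ℕ := fun i => if h : i < n + 1 then v ⟨i, h⟩ else 0 with hs
  have hcyl : (fun ω (i : Fin (n + 1)) => X i ω) ⁻¹' {v} = {ω | ∀ i ≤ n, X i ω = s i} := by
    ext ω
    simp only [Set.mem_preimage, Set.mem_singleton_iff, funext_iff, Fin.forall_iff,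
      Set.mem_ofPred_eq, hs]
    exact ⟨fun h i hi => by simp [Nat.lt_succ_of_le hi, h i (by omega)],
      fun h i hi => by simpa [hi] using h i (by omega)⟩
  have hlast : v (Fin.last n) = s n := by simp [hs, Fin.last]
  rw [hcyl, hlast, ← hM]
  rfl

theorem measure_inter_preimage_succ (hX : ∀ n, Measurable (X n)) (hM : IsMarkovChain μ X p)
    (n a j m : ℕ) :
    μ (X 0 ⁻¹' {a} ∩ X n ⁻¹' {j} ∩ X (n + 1) ⁻¹' {m})
      = μ (X 0 ⁻¹' {a} ∩ X n ⁻¹' {j}) * ENNReal.ofReal (p j m) := by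
  -- Sum the Markov property over all histories `(X 0, …, X n)` from `a` to `j`.
  set H : Ω → Fin (n + 1) → ℕ := fun ω i => X i ω with hH
  set S : Set (Fin (n + 1) → ℕ) := {v | v 0 = a ∧ v (Fin.last n) = j} with hS
  have hHS : X 0 ⁻¹' {a} ∩ X n ⁻¹' {j} = H ⁻¹' S := by ext ω; simp [hH, hS, Fin.last]
  have hHm : Measurable H := measurable_pi_lambda _ fun i => hX i
  have hmeas : ∀ v ∈ S, MeasurableSet (H ⁻¹' {v}) := fun v _ => hHm (measurableSet_singleton v)
  have hXm : MeasurableSet (X (n + 1) ⁻¹' {m}) := hX _ (measurableSet_singleton m)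
  rw [hHS, ← Measure.restrict_apply' hXm, ← tsum_measure_preimage_singleton S.to_countable hmeas,
    ← tsum_measure_preimage_singleton S.to_countable hmeas, ← ENNReal.tsum_mul_right]
  refine tsum_congr fun v => ?_
  rw [Measure.restrict_apply' hXm, measure_cylinder_inter hM, v.2.2]

theorem measure_inter_eq_law (hX : ∀ n, Measurable (X n)) (hM : IsMarkovChain μ X p)
    (hp : ∀ j m, 0 ≤ p j m) (hsupp : ∀ j m, m ≠ 0 → m ≠ j + 1 → p j m = 0) (n k : ℕ) :
    μ (X 0 ⁻¹' {0} ∩ X n ⁻¹' {k}) = μ (X 0 ⁻¹' {0}) * ENNReal.ofReal (ResetChain.law p n k) := by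
  induction n generalizing k with
  | zero =>
    rcases eq_or_ne k 0 with rfl | hk
    · simp [ResetChain.law]
    · have hempty : X 0 ⁻¹' {0} ∩ X 0 ⁻¹' {k} = ∅ :=
        ((Set.disjoint_singleton.2 hk.symm).preimage _).inter_eq
      simp [ResetChain.law, hk, hempty]
  | succ n ih =>
    have hcover : X 0 ⁻¹' {0} ∩ X (n + 1) ⁻¹' {k}
        = ⋃ j, X 0 ⁻¹' {0} ∩ X n ⁻¹' {j} ∩ X (n + 1) ⁻¹' {k} := by
      ext ω; simp
    have hdisj : Pairwise
        (Function.onFun Disjoint fun j => X 0 ⁻¹' {0} ∩ X n ⁻¹' {j} ∩ X (n + 1) ⁻¹' {k}) :=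
      fun i j hij => (((Set.disjoint_singleton.2 hij).preimage (X n)).mono inf_le_right
        inf_le_right).mono inf_le_left inf_le_left
    have hmeas : ∀ j, MeasurableSet (X 0 ⁻¹' {0} ∩ X n ⁻¹' {j} ∩ X (n + 1) ⁻¹' {k}) := fun j =>
      ((hX 0 (measurableSet_singleton _)).inter (hX n (measurableSet_singleton _))).inter
        (hX _ (measurableSet_singleton _))
    have hlaw := ResetChain.hasSum_law_mul hsupp n k
    rw [hcover, measure_iUnion hdisj hmeas, ← hlaw.tsum_eq,
      ENNReal.ofReal_tsum_of_nonneg (fun j => mul_nonneg (ResetChain.law_nonneg hp n j) (hp j k))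
        hlaw.summable, ← ENNReal.tsum_mul_left]
    refine tsum_congr fun j => ?_
    rw [measure_inter_preimage_succ hX hM, ih, ENNReal.ofReal_mul (ResetChain.law_nonneg hp n j),
      mul_assoc]

theorem cond_preimage_le_law [IsFiniteMeasure μ] (hX : ∀ n, Measurable (X n))
    (hM : IsMarkovChain μ X p) (hp : ∀ j m, 0 ≤ p j m)
    (hsupp : ∀ j m, m ≠ 0 → m ≠ j + 1 → p j m = 0) (n k : ℕ) :
    μ[X n ⁻¹' {k} | X 0 ⁻¹' {0}] ≤ ENNReal.ofReal (ResetChain.law p n k) := by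
  rw [cond_apply (hX 0 (measurableSet_singleton 0)), measure_inter_eq_law hX hM hp hsupp]
  rcases eq_or_ne (μ (X 0 ⁻¹' {0})) 0 with h0 | h0
  · simp [h0]
  · rw [ENNReal.inv_mul_cancel_left h0 (measure_ne_top _ _)]

theorem cond_lt_half_le [IsFiniteMeasure μ] (hX : ∀ n, Measurable (X n))
    (hM : IsMarkovChain μ X p) (hp : ∀ j m, 0 ≤ p j m) (hsum : ∀ j, p j 0 + p j (j + 1) = 1)
    (hsupp : ∀ j m, m ≠ 0 → m ≠ j + 1 → p j m = 0) {z : ℝ} (hz : 1 < z)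
    (hgen : ∀ T, ∑ j ∈ range T, ResetChain.firstReturn p j * z ^ (j + 1) ≤ 1) (n : ℕ) :
    μ[{ω | (X n ω : ℝ) < n / 2} | X 0 ⁻¹' {0}]
      ≤ ENNReal.ofReal (z / (z - 1) * exp (-(log z / 2) * n)) := by
  have hset : {ω | (X n ω : ℝ) < n / 2} = X n ⁻¹' ↑(range ((n + 1) / 2)) := by
    ext ω
    simp only [Set.mem_ofPred_eq, Set.mem_preimage, coe_range, Set.mem_Iio]
    rw [lt_div_iff₀ two_pos, ← Nat.cast_ofNat, ← Nat.cast_mul, Nat.cast_lt]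
    omega
  calc μ[{ω | (X n ω : ℝ) < n / 2} | X 0 ⁻¹' {0}]
      = ∑ k ∈ range ((n + 1) / 2), μ[X n ⁻¹' {k} | X 0 ⁻¹' {0}] := by
        rw [hset, sum_measure_preimage_singleton _ fun k _ => hX n (measurableSet_singleton k)]
    _ ≤ ∑ k ∈ range ((n + 1) / 2), ENNReal.ofReal (z ^ k / z ^ n) := sum_le_sum fun k _ =>
        (hM.cond_preimage_le_law hX hp hsupp n k).trans <| ENNReal.ofReal_le_ofReal <|
          ResetChain.law_le_pow_div_pow hp hsum (by linarith) hgen n k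
    _ = ENNReal.ofReal (∑ k ∈ range ((n + 1) / 2), z ^ k / z ^ n) :=
        (ENNReal.ofReal_sum_of_nonneg fun k _ => by positivity).symm
    _ ≤ ENNReal.ofReal (z / (z - 1) * exp (-(log z / 2) * n)) :=
        ENNReal.ofReal_le_ofReal (sum_range_half_pow_div_pow_le hz n)

end IsMarkovChain

theorem markov_chain_reset_exponential_bound_general
    (ε : ℕ → ℝ) (hε_mem : ∀ j, ε j ∈ Set.Ico (0 : ℝ) 1)
    (hε_limsup : Filter.limsup (fun n => (ε n) ^ ((1 : ℝ) / n)) Filter.atTop < 1) :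
    ∃ c u : ℝ, 0 < u ∧
      ∀ (Ω : Type) (_ : MeasureSpace Ω) (_ : IsProbabilityMeasure (ℙ : Measure Ω))
        (X : ℕ → Ω → ℕ) (p : ℕ → ℕ → ℝ),
        (∀ n, Measurable (X n)) →
        (∀ j m, 0 ≤ p j m) →
        (∀ j, p j 0 + p j (j + 1) = 1) →
        (∀ j m, m ≠ 0 → m ≠ j + 1 → p j m = 0) →
        (∀ j, p j 0 ≤ ε j) →
        -- time-homogeneous Markov property with transition matrix `p`:
        (∀ n (s : ℕ → ℕ) (m : ℕ),
          ℙ {ω | (∀ i ≤ n, X i ω = s i) ∧ X (n + 1) ω = m}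
            = ℙ {ω | ∀ i ≤ n, X i ω = s i} * ENNReal.ofReal (p (s n) m)) →
        ∀ n : ℕ,
          (ℙ[|{ω | X 0 ω = 0}]) {ω | (X n ω : ℝ) < n / 2}
            ≤ ENNReal.ofReal (c * Real.exp (-u * n)) := by
  have hε0 : ∀ j, 0 ≤ ε j := fun j => (hε_mem j).1
  obtain ⟨C, ρ, hρ0, hρ1, hgeo⟩ :=
    exists_le_mul_pow_of_limsup_rpow_lt_one hε0 (fun j => (hε_mem j).2.le) hε_limsup
  have hsummable : Summable ε := .of_nonneg_of_le hε0 hgeo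
    ((summable_geometric_of_lt_one hρ0.le hρ1).mul_left C)
  obtain ⟨δ, hδ, hδprod⟩ := exists_pos_le_prod_one_sub hsummable hε0 fun j => (hε_mem j).2
  obtain ⟨z, hz1, hzε⟩ := exists_one_lt_sum_mul_pow_sub_one_le hε0 hρ0.le hρ1 hgeo hδ
  refine ⟨z / (z - 1), log z / 2, by linarith [log_pos hz1], ?_⟩
  rintro Ω _ _ X p hX hp hsum hsupp hpε (hM : IsMarkovChain ℙ X p) n
  exact hM.cond_lt_half_le hX hp hsum hsupp hz1 (ResetChain.sum_firstReturn_mul_pow_le_one hp hsum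
    hpε (fun j => (hε_mem j).2.le) hδprod hzε hz1.le) n

/-- **Exponential growth for a Markov chain that either steps up or resets to 0.**
If `(ε j)` is a nonincreasing sequence in `[0,1)` with `limsup ε_n^{1/n} < 1`, then there are
constants `c` and `u > 0`, depending only on `ε`, such that for any time-homogeneous Markov
chain `X` on `ℕ` that from state `j` jumps to `j+1` or to `0`, with `p(j,0) ≤ ε j`, we have
`P(X_n < n/2 ∣ X_0 = 0) ≤ c e^{-u n}`. -/
theorem markov_chain_reset_exponential_bound
    (ε : ℕ → ℝ) (hε_anti : Antitone ε) (hε_mem : ∀ j, ε j ∈ Set.Ico (0 : ℝ) 1)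
    (hε_limsup : Filter.limsup (fun n => (ε n) ^ ((1 : ℝ) / n)) Filter.atTop < 1) :
    ∃ c u : ℝ, 0 < u ∧
      ∀ (Ω : Type) (_ : MeasureSpace Ω) (_ : IsProbabilityMeasure (ℙ : Measure Ω))
        (X : ℕ → Ω → ℕ) (p : ℕ → ℕ → ℝ),
        (∀ n, Measurable (X n)) →
        (∀ j m, 0 ≤ p j m) →
        (∀ j, p j 0 + p j (j + 1) = 1) →
        (∀ j m, m ≠ 0 → m ≠ j + 1 → p j m = 0) →
        (∀ j, p j 0 ≤ ε j) →
        -- time-homogeneous Markov property with transition matrix `p`: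
        (∀ n (s : ℕ → ℕ) (m : ℕ),
          ℙ {ω | (∀ i ≤ n, X i ω = s i) ∧ X (n + 1) ω = m}
            = ℙ {ω | ∀ i ≤ n, X i ω = s i} * ENNReal.ofReal (p (s n) m)) →
        ∀ n : ℕ,
          (ℙ[|{ω | X 0 ω = 0}]) {ω | (X n ω : ℝ) < n / 2}
            ≤ ENNReal.ofReal (c * Real.exp (-u * n)) :=
  markov_chain_reset_exponential_bound_general ε hε_mem hε_limsup
end

section
/- Let a > 0, let U : [0,∞) → ℝ be continuous, let I ⊂ ℝ be an open interval, and let T > 0. Suppose h : [0,T] × I → ℝ is continuous, its partial derivative ∂_x h exists and is continuous on [0,T] × I, and for each x ∈ I the function t ↦ h_t(x) satisfies ∂_t h_t(x) = a cot(h_t(x) − U_t) with h_0(x) = x and sin(h_t(x) − U_t) ≠ 0 for all t ∈ [0,T]. Then for all x ∈ I and t ∈ [0,T], ∂_x h_t(x) = exp{ −a ∫_0^t ds / sin²(h_s(x) − U_s) }. -/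
open Set Real Filter intervalIntegral
open scoped Interval

/-!
Integrating the ODE gives `h_t(y) = y + ∫₀ᵗ a cot (h_s(y) - U_s) ds`. Since `∂_x h` is jointly
continuous, it is bounded on compact rectangles, so this identity may be differentiated in `y`
under the integral sign; as `cot' = -1 / sin²`, `f(t) = ∂_x h_t(x)` solves the linear equation
`f(t) = 1 + ∫₀ᵗ q_s f(s) ds` with `q_s = -a / sin² (h_s(x) - U_s)`. Then `f(t) exp(-∫₀ᵗ q)` has
zero derivative, so `f(t) = exp(∫₀ᵗ q)`.
-/

theorem Real.hasDerivAt_cot {x : ℝ} (hx : sin x ≠ 0) : HasDerivAt cot (-1 / sin x ^ 2) x := by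
  rw [show cot = fun y => cos y / sin y from funext cot_eq_cos_div_sin]
  refine ((hasDerivAt_cos x).fun_div (hasDerivAt_sin x) hx).congr_deriv ?_
  field_simp
  linear_combination -sin_sq_add_cos_sq x

section Icc

variable {E : Type*} [NormedAddCommGroup E] [NormedSpace ℝ E] {a b t : ℝ}

theorem ContinuousOn.hasDerivWithinAt_integral_Icc [CompleteSpace E] {g : ℝ → E}
    (hg : ContinuousOn g (Icc a b)) (ht : t ∈ Icc a b) :
    HasDerivWithinAt (fun u => ∫ s in a..u, g s) (g t) (Icc a b) t := by
  have : Fact (t ∈ Icc a b) := ⟨ht⟩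
  refine integral_hasDerivWithinAt_right ?_ ?_ (hg t ht)
  · exact (hg.mono (by rw [uIcc_of_le ht.1]; exact Icc_subset_Icc le_rfl ht.2)).intervalIntegrable
  · exact ⟨Icc a b, self_mem_nhdsWithin, hg.aestronglyMeasurable measurableSet_Icc⟩

theorem eq_of_hasDerivWithinAt_zero_Icc {f : ℝ → E}
    (hf : ∀ t ∈ Icc a b, HasDerivWithinAt f 0 (Icc a b) t) : ∀ t ∈ Icc a b, f t = f a :=
  constant_of_has_deriv_right_zero (fun t ht => (hf t ht).continuousWithinAt)
    fun t ht => (hf t (Ico_subset_Icc_self ht)).mono_of_mem_nhdsWithin (Icc_mem_nhdsGE_of_mem ht)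

theorem eq_add_integral_of_hasDerivWithinAt_Icc [CompleteSpace E] {f f' : ℝ → E}
    (hf : ∀ t ∈ Icc a b, HasDerivWithinAt f (f' t) (Icc a b) t) (hf' : ContinuousOn f' (Icc a b))
    (ht : t ∈ Icc a b) : f t = f a + ∫ s in a..t, f' s := by
  have hconst := eq_of_hasDerivWithinAt_zero_Icc (f := fun u => f u - ∫ s in a..u, f' s)
    (fun u hu =>
      ((hf u hu).fun_sub (hf'.hasDerivWithinAt_integral_Icc hu)).congr_deriv (sub_self _)) t ht
  simp only [integral_same, sub_zero] at hconst
  rw [← hconst, sub_add_cancel]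

end Icc

theorem eq_mul_exp_integral_of_eq_add_integral {q f : ℝ → ℝ} {a b c : ℝ}
    (hq : ContinuousOn q (Icc a b)) (hf : ContinuousOn f (Icc a b))
    (hfe : ∀ t ∈ Icc a b, f t = c + ∫ s in a..t, q s * f s) :
    ∀ t ∈ Icc a b, f t = c * exp (∫ s in a..t, q s) := by
  intro t ht
  have hf_deriv : ∀ u ∈ Icc a b, HasDerivWithinAt f (q u * f u) (Icc a b) u := fun u hu =>
    (((hq.mul hf).hasDerivWithinAt_integral_Icc hu).const_add c).congr hfe (hfe u hu)
  have hconst := eq_of_hasDerivWithinAt_zero_Icc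
    (f := fun u => f u * exp (-∫ s in a..u, q s)) (fun u hu => by
      refine ((hf_deriv u hu).fun_mul
        (hq.hasDerivWithinAt_integral_Icc hu).fun_neg.exp).congr_deriv ?_
      ring) t ht
  have hfa : f a = c := by simpa using hfe a (left_mem_Icc.2 (ht.1.trans ht.2))
  simp only [integral_same, neg_zero, exp_zero, mul_one, hfa] at hconst
  rw [← hconst, mul_assoc, ← exp_add, neg_add_cancel, exp_zero, mul_one]

theorem hasDerivAt_integral_of_continuousOn_deriv {F F' : ℝ → ℝ → ℝ} {I : Set ℝ} {a b x : ℝ}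
    (hI : IsOpen I) (hx : x ∈ I) (hF : ∀ y ∈ I, ContinuousOn (fun s => F s y) [[a, b]])
    (hF' : ContinuousOn (fun p : ℝ × ℝ => F' p.1 p.2) ([[a, b]] ×ˢ I))
    (hF_deriv : ∀ s ∈ [[a, b]], ∀ y ∈ I, HasDerivAt (F s) (F' s y) y) :
    HasDerivAt (fun y => ∫ s in a..b, F s y) (∫ s in a..b, F' s x) x := by
  obtain ⟨ε, hε, hball⟩ := Metric.nhds_basis_closedBall.mem_iff.1 (hI.mem_nhds hx)
  obtain ⟨C, hC⟩ := (isCompact_uIcc.prod (isCompact_closedBall x ε)).exists_bound_of_continuousOn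
    (hF'.mono (prod_mono_right hball))
  have hF'x : ContinuousOn (fun s => F' s x) [[a, b]] := hF'.uncurry_right (f := F') x hx
  refine (hasDerivAt_integral_of_dominated_loc_of_deriv_le (F := fun y s => F s y)
    (F' := fun y s => F' s y) (bound := fun _ => C)
    (Metric.ball_mem_nhds x hε) ?_ (hF x hx).intervalIntegrable
    ((hF'x.mono uIoc_subset_uIcc).aestronglyMeasurable measurableSet_uIoc) ?_
    intervalIntegrable_const ?_).2
  · filter_upwards [hI.mem_nhds hx] with y hy
    exact ((hF y hy).mono uIoc_subset_uIcc).aestronglyMeasurable measurableSet_uIoc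
  · filter_upwards with s hs y hy
    exact hC (s, y) ⟨uIoc_subset_uIcc hs, Metric.ball_subset_closedBall hy⟩
  · filter_upwards with s hs y hy
    exact hF_deriv s (uIoc_subset_uIcc hs) y (hball (Metric.ball_subset_closedBall hy))

theorem radial_loewner_spatial_derivative_general
    (a : ℝ) (U : ℝ → ℝ) (hU : Continuous U)
    (I : Set ℝ) (hI_open : IsOpen I)
    (T : ℝ)
    (h h' : ℝ → ℝ → ℝ)
    (hh_cont : ContinuousOn (fun p : ℝ × ℝ => h p.1 p.2) (Set.Icc (0 : ℝ) T ×ˢ I))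
    (hh'_deriv : ∀ t ∈ Set.Icc (0 : ℝ) T, ∀ x ∈ I, HasDerivAt (h t) (h' t x) x)
    (hh'_cont : ContinuousOn (fun p : ℝ × ℝ => h' p.1 p.2) (Set.Icc (0 : ℝ) T ×ˢ I))
    (h_init : ∀ x ∈ I, h 0 x = x)
    (h_sin_ne : ∀ x ∈ I, ∀ t ∈ Set.Icc (0 : ℝ) T, Real.sin (h t x - U t) ≠ 0)
    (h_ode : ∀ x ∈ I, ∀ t ∈ Set.Icc (0 : ℝ) T,
      HasDerivWithinAt (fun s => h s x) (a * Real.cot (h t x - U t))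
        (Set.Icc (0 : ℝ) T) t) :
    ∀ x ∈ I, ∀ t ∈ Set.Icc (0 : ℝ) T,
      h' t x = Real.exp (-a * ∫ s in (0 : ℝ)..t, 1 / (Real.sin (h s x - U s)) ^ 2) := by
  intro x hx
  set F : ℝ → ℝ → ℝ := fun s y => a * cot (h s y - U s)
  set q : ℝ → ℝ → ℝ := fun s y => -a * (1 / sin (h s y - U s) ^ 2)
  have hθ : ContinuousOn (fun p : ℝ × ℝ => h p.1 p.2 - U p.1) (Icc 0 T ×ˢ I) :=
    hh_cont.sub (hU.comp continuous_fst).continuousOn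
  have hF : ContinuousOn (fun p : ℝ × ℝ => F p.1 p.2) (Icc 0 T ×ˢ I) := fun p hp =>
    continuousWithinAt_const.mul
      ((hasDerivAt_cot (h_sin_ne p.2 hp.2 p.1 hp.1)).continuousAt.comp_continuousWithinAt
        (f := fun p : ℝ × ℝ => h p.1 p.2 - U p.1) (hθ p hp))
  have hq : ContinuousOn (fun p : ℝ × ℝ => q p.1 p.2) (Icc 0 T ×ˢ I) :=
    continuousOn_const.mul (continuousOn_const.div (continuous_sin.comp_continuousOn hθ |>.pow 2)
      fun p hp => pow_ne_zero 2 (h_sin_ne p.2 hp.2 p.1 hp.1))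
  have hF_deriv : ∀ s ∈ Icc 0 T, ∀ y ∈ I, HasDerivAt (F s) (q s y * h' s y) y :=
    fun s hs y hy => by
    refine (((hasDerivAt_cot (h_sin_ne y hy s hs)).comp y
      ((hh'_deriv s hs y hy).sub_const (U s))).const_mul a).congr_deriv ?_
    ring
  have h_integral : ∀ y ∈ I, ∀ t ∈ Icc 0 T, h t y = y + ∫ s in 0..t, F s y := fun y hy t ht => by
    rw [eq_add_integral_of_hasDerivWithinAt_Icc (h_ode y hy) (hF.uncurry_right (f := F) y hy) ht,
      h_init y hy]
  have h'_integral : ∀ t ∈ Icc 0 T, h' t x = 1 + ∫ s in 0..t, q s x * h' s x := fun t ht => by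
    have hsub : [[0, t]] ⊆ Icc 0 T := by rw [uIcc_of_le ht.1]; exact Icc_subset_Icc le_rfl ht.2
    refine (hh'_deriv t ht x hx).unique (((hasDerivAt_id x).add
      (hasDerivAt_integral_of_continuousOn_deriv hI_open hx
        (fun y hy => (hF.uncurry_right (f := F) y hy).mono hsub)
        ((hq.mul hh'_cont).mono (prod_mono_left hsub))
        fun s hs => hF_deriv s (hsub hs))).congr_of_eventuallyEq ?_)
    filter_upwards [hI_open.mem_nhds hx] with y hy using h_integral y hy t ht
  intro t ht
  rw [eq_mul_exp_integral_of_eq_add_integral (hq.uncurry_right (f := q) x hx)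
    (hh'_cont.uncurry_right (f := h') x hx) h'_integral t ht, one_mul,
    ← intervalIntegral.integral_const_mul]

/-- **Spatial derivative of the angular radial Loewner flow.**
If `h_t(x)` solves `∂_t h_t(x) = a cot(h_t(x) - U_t)`, `h_0(x) = x`, with
`sin(h_t(x) - U_t) ≠ 0` on `[0,T]`, and `∂_x h` exists and is continuous on
`[0,T] × I`, then `∂_x h_t(x) = exp{-a ∫_0^t ds / sin²(h_s(x) - U_s)}`. -/
theorem radial_loewner_spatial_derivative
    (a : ℝ) (ha : 0 < a) (U : ℝ → ℝ) (hU : Continuous U)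
    (I : Set ℝ) (hI_open : IsOpen I) (hI_conn : I.OrdConnected)
    (T : ℝ) (hT : 0 < T)
    (h h' : ℝ → ℝ → ℝ)
    (hh_cont : ContinuousOn (fun p : ℝ × ℝ => h p.1 p.2) (Set.Icc (0 : ℝ) T ×ˢ I))
    (hh'_deriv : ∀ t ∈ Set.Icc (0 : ℝ) T, ∀ x ∈ I, HasDerivAt (h t) (h' t x) x)
    (hh'_cont : ContinuousOn (fun p : ℝ × ℝ => h' p.1 p.2) (Set.Icc (0 : ℝ) T ×ˢ I))
    (h_init : ∀ x ∈ I, h 0 x = x)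
    (h_sin_ne : ∀ x ∈ I, ∀ t ∈ Set.Icc (0 : ℝ) T, Real.sin (h t x - U t) ≠ 0)
    (h_ode : ∀ x ∈ I, ∀ t ∈ Set.Icc (0 : ℝ) T,
      HasDerivWithinAt (fun s => h s x) (a * Real.cot (h t x - U t))
        (Set.Icc (0 : ℝ) T) t) :
    ∀ x ∈ I, ∀ t ∈ Set.Icc (0 : ℝ) T,
      h' t x = Real.exp (-a * ∫ s in (0 : ℝ)..t, 1 / (Real.sin (h s x - U s)) ^ 2) :=
  radial_loewner_spatial_derivative_general a U hU I hI_open T h h' hh_cont hh'_deriv hh'_cont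
    h_init h_sin_ne h_ode
end
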